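/- arXiv:0902.1944 — 8 statements merged into one kernel-verified Lean document; each statement's English description precedes it below -/
import Mathlib

section
/- The compact space {0,1}^{ω₁} with the product topology does not satisfy the selection principle S₁^{ω₁}(𝒪,𝒪): there exists an ω₁-indexed sequence of open covers (𝒰_α : α < ω₁) such that no choice of one member from each 𝒰_α yields a cover. -/
open Set

/-- The set of ordinals below ω₁, as an index type of cardinality ℵ₁. -/
def Omega1 : Type 1 := {o : Ordinal.{0} // o < (Cardinal.aleph.{0} 1).ord}

/-- `𝒰` is an open cover of the space `X`. -/
def IsOpenCover {X : Type*} [TopologicalSpace X] (𝒰 : Set (Set X)) : Prop :=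
  (∀ U ∈ 𝒰, IsOpen U) ∧ ⋃₀ 𝒰 = Set.univ

/-!
Cover the `i`-th stage by the fibres `{f | f i = x}` of the `i`-th coordinate. A selection
picks one value `x i` in every coordinate, and any point `f` with `f i ≠ x i` for all `i`
escapes every selected set.
-/

section CoordinateFibers

variable {ι : Type*} {X : ι → Type*}

def coordinateFiberCover (i : ι) : Set (Set (∀ i, X i)) :=
  range fun x : X i => {f | f i = x}

theorem isOpenCover_coordinateFiberCover [∀ i, TopologicalSpace (X i)]
    [∀ i, DiscreteTopology (X i)] (i : ι) :
    IsOpenCover (coordinateFiberCover (X := X) i) := by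
  refine ⟨?_, ?_⟩
  · rintro _ ⟨x, rfl⟩
    exact (isOpen_discrete {x}).preimage (continuous_apply i)
  · exact sUnion_eq_univ_iff.2 fun f => ⟨_, ⟨f i, rfl⟩, rfl⟩

theorem iUnion_ne_univ_of_mem_coordinateFiberCover [∀ i, Nontrivial (X i)]
    {U : ι → Set (∀ i, X i)} (hU : ∀ i, U i ∈ coordinateFiberCover i) :
    ⋃ i, U i ≠ univ := by
  choose x hx using hU
  choose f hf using fun i => exists_ne (x i)
  intro hcover
  obtain ⟨i, hi⟩ := mem_iUnion.1 (hcover ▸ mem_univ f)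
  rw [← hx i] at hi
  exact hf i hi

end CoordinateFibers

/-- The compact space `{0,1}^{ω₁}` does not satisfy `S₁^{ω₁}(𝒪,𝒪)`. -/
theorem stmt2 :
    ∃ 𝒰 : Omega1 → Set (Set (Omega1 → Bool)),
      (∀ α, IsOpenCover (𝒰 α)) ∧
        ¬ ∃ U : Omega1 → Set (Omega1 → Bool),
            (∀ α, U α ∈ 𝒰 α) ∧ (⋃ α, U α) = Set.univ :=
  ⟨coordinateFiberCover, isOpenCover_coordinateFiberCover,
    fun ⟨_, hU, hcover⟩ => iUnion_ne_univ_of_mem_coordinateFiberCover hU hcover⟩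
end

section
/- Let X be a topological space in which every point is a Gδ set, let Y ⊆ X, and let μ be a countably additive measure defined on all subsets of Y with μ(Y) = 1 such that every singleton has measure 0. Then X does not have the Rothberger property. -/
open Set

/-- The Rothberger property `S₁^ω(𝒪,𝒪)`. -/
def RothbergerSpace (X : Type*) [TopologicalSpace X] : Prop :=
  ∀ 𝒰 : ℕ → Set (Set X), (∀ n, IsOpenCover (𝒰 n)) →
    ∃ U : ℕ → Set X, (∀ n, U n ∈ 𝒰 n) ∧ (⋃ n, U n) = Set.univ

/-!
Push `μ` forward to a finite measure on all subsets of `X` vanishing on points. By continuity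
from above, a null Gδ set has open neighbourhoods of arbitrarily small measure, so for every
`δ > 0` the open sets of measure `< δ` cover `X`. A Rothberger selection from the covers for
`δₙ` with `∑ δₙ < ε` covers `X` by sets of total measure `< ε`, so `μ X = 0`, contradicting
`μ X = 1`.
-/

open MeasureTheory Filter Topology ENNReal

theorem IsGδ.exists_isOpen_superset_measure_lt {X : Type*} [TopologicalSpace X]
    [MeasurableSpace X] [OpensMeasurableSpace X] (μ : Measure X) [IsFiniteMeasure μ]
    {s : Set X} (hs : IsGδ s) (hμs : μ s = 0) {ε : ℝ≥0∞} (hε : 0 < ε) :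
    ∃ U, IsOpen U ∧ s ⊆ U ∧ μ U < ε := by
  obtain ⟨V, hV, rfl⟩ := hs.eq_iInter_nat
  have hlim : Tendsto (fun n ↦ μ (⋂ k ≤ n, V k)) atTop (𝓝 (μ (⋂ n, V n))) :=
    tendsto_measure_iInter_le (fun n ↦ (hV n).nullMeasurableSet) ⟨0, measure_ne_top μ _⟩
  rw [hμs] at hlim
  obtain ⟨n, hn⟩ := (hlim.eventually (gt_mem_nhds hε)).exists
  exact ⟨⋂ k ≤ n, V k, (finite_Iic n).isOpen_biInter fun k _ ↦ hV k,
    subset_iInter₂ fun k _ ↦ iInter_subset V k, hn⟩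

theorem RothbergerSpace.measure_univ_eq_zero {X : Type*} [TopologicalSpace X]
    [MeasurableSpace X] (hX : RothbergerSpace X) (μ : Measure X)
    (hsmall : ∀ x, ∀ ε > 0, ∃ U, IsOpen U ∧ x ∈ U ∧ μ U < ε) : μ univ = 0 := by
  refine nonpos_iff_eq_zero.1 (le_of_forall_gt_imp_ge_of_dense fun ε hε ↦ ?_)
  obtain ⟨δ, hδ, hδε⟩ := ENNReal.exists_pos_sum_of_countable' hε.ne' ℕ
  have hcover : ∀ n, IsOpenCover {U : Set X | IsOpen U ∧ μ U < δ n} := fun n ↦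
    ⟨fun U hU ↦ hU.1, eq_univ_of_forall fun x ↦
      let ⟨U, hUo, hxU, hμU⟩ := hsmall x (δ n) (hδ n)
      mem_sUnion.2 ⟨U, ⟨hUo, hμU⟩, hxU⟩⟩
  obtain ⟨U, hU, hUX⟩ := hX _ hcover
  calc μ univ = μ (⋃ n, U n) := by rw [hUX]
    _ ≤ ∑' n, μ (U n) := measure_iUnion_le U
    _ ≤ ∑' n, δ n := ENNReal.tsum_le_tsum fun n ↦ (hU n).2.le
    _ ≤ ε := hδε.le

theorem stmt5 (X : Type*) [TopologicalSpace X]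
    (hGδ : ∀ x : X, ∃ U : ℕ → Set X, (∀ n, IsOpen (U n)) ∧ (⋂ n, U n) = {x})
    (Y : Set X) (μ : @MeasureTheory.Measure ↥Y ⊤)
    (hprob : μ Set.univ = 1) (hsingle : ∀ y : ↥Y, μ {y} = 0) :
    ¬ RothbergerSpace X := by
  intro hX
  let _ : MeasurableSpace Y := ⊤
  let _ : MeasurableSpace X := ⊤
  have : OpensMeasurableSpace X := ⟨le_top⟩
  have : NullSingletonClass μ := ⟨hsingle⟩
  let ν := μ.map ((↑) : Y → X)
  have hν : ∀ s, ν s = μ ((↑) ⁻¹' s) := fun s ↦ Measure.map_apply measurable_from_top trivial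
  have : IsFiniteMeasure ν := ⟨by simp [hν, hprob]⟩
  have hpoint : ∀ x : X, ν {x} = 0 := fun x ↦
    hν {x} ▸ (subsingleton_singleton.preimage Subtype.val_injective).measure_zero μ
  have hsmall : ∀ x, ∀ ε > 0, ∃ U, IsOpen U ∧ x ∈ U ∧ ν U < ε := by
    intro x ε hε
    obtain ⟨U, hU, hUx⟩ := hGδ x
    obtain ⟨V, hV, hxV, hνV⟩ :=
      (hUx ▸ IsGδ.iInter_of_isOpen hU).exists_isOpen_superset_measure_lt ν (hpoint x) hε
    exact ⟨V, hV, hxV rfl, hνV⟩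
  simpa [hν, hprob] using hX.measure_univ_eq_zero ν hsmall
end

section
/- Every Rothberger space in which each point is a Gδ set has cardinality strictly less than the least real-valued measurable cardinal. -/
open Set

/-- `κ` is a real-valued measurable cardinal: there is a `κ`-additive
probability measure on all subsets of a set of cardinality `κ` vanishing on
singletons (and `κ` is uncountable). -/
def IsRealValuedMeasurable (κ : Cardinal.{0}) : Prop :=
  Cardinal.aleph0 < κ ∧
  ∃ (α : Type) (_ : Cardinal.mk α = κ) (μ : @MeasureTheory.Measure α ⊤),
    μ Set.univ = 1 ∧ (∀ a : α, μ {a} = 0) ∧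
    ∀ (ι : Type) (s : ι → Set α), Cardinal.mk ι < κ →
      (∀ i, μ (s i) = 0) → μ (⋃ i, s i) = 0

theorem stmt6 (X : Type) [TopologicalSpace X]
    (hGδ : ∀ x : X, ∃ U : ℕ → Set X, (∀ n, IsOpen (U n)) ∧ (⋂ n, U n) = {x})
    (hR : RothbergerSpace X) :
    ∀ κ : Cardinal.{0}, IsRealValuedMeasurable κ → Cardinal.mk X < κ := by
  intro κ hκ
  by_contra hle
  push_neg at hle
  obtain ⟨hℵ, α, hα, μ, hμ1, hμs, _hadd⟩ := hκ
  letI : MeasurableSpace α := ⊤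
  -- get an injection from α into X
  have hcard : Cardinal.mk α ≤ Cardinal.mk X := hα ▸ hle
  obtain ⟨f⟩ := (Cardinal.le_def α X).mp hcard
  -- key: each point has open nbhds of arbitrarily small measure
  have key : ∀ (x : X) (ε : ENNReal), 0 < ε →
      ∃ U : Set X, IsOpen U ∧ x ∈ U ∧ μ (f ⁻¹' U) < ε := by
    intro x ε hε
    obtain ⟨W, hWopen, hWx⟩ := hGδ x
    set V : ℕ → Set X := fun n => ⋂ k ∈ Finset.range (n + 1), W k with hV
    have hVopen : ∀ n, IsOpen (V n) := fun n =>
      isOpen_biInter_finset fun k _ => hWopen k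
    have hVanti : Antitone V := by
      intro m n hmn y hy
      simp only [hV, Set.mem_iInter] at *
      intro k hk
      exact hy k (Finset.mem_range.mpr (by
        have := Finset.mem_range.mp hk; omega))
    have hVint : (⋂ n, V n) = {x} := by
      rw [← hWx]
      apply Set.Subset.antisymm
      · intro y hy
        simp only [hV, Set.mem_iInter] at *
        intro k
        exact hy k k (Finset.self_mem_range_succ k)
      · intro y hy
        simp only [hV, Set.mem_iInter] at *
        intro n k _
        exact hy k
    have hxV : ∀ n, x ∈ V n := by
      intro n
      have : x ∈ ⋂ n, V n := by rw [hVint]; exact rfl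
      exact Set.mem_iInter.mp this n
    have hsub : μ (f ⁻¹' {x}) = 0 := by
      by_cases h : ∃ a, f a = x
      · obtain ⟨a, ha⟩ := h
        have : f ⁻¹' {x} = {a} := by
          ext b
          simp only [Set.mem_preimage, Set.mem_singleton_iff]
          constructor
          · intro hb; exact f.injective (hb.trans ha.symm)
          · intro hb; rw [hb, ha]
        rw [this]; exact hμs a
      · have : f ⁻¹' {x} = ∅ := by
          ext b
          simp only [Set.mem_preimage, Set.mem_singleton_iff, Set.mem_empty_iff_false,
            iff_false]
          exact fun hb => h ⟨b, hb⟩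
        rw [this]; exact MeasureTheory.measure_empty
    have htend : Filter.Tendsto (fun n => μ (f ⁻¹' V n)) Filter.atTop (nhds 0) := by
      have := MeasureTheory.tendsto_measure_iInter_atTop (μ := μ) (s := fun n => f ⁻¹' V n)
        (fun i => (MeasurableSpace.measurableSet_top).nullMeasurableSet)
        (fun m n hmn => Set.preimage_mono (hVanti hmn))
        ⟨0, (lt_of_le_of_lt (MeasureTheory.measure_mono (Set.subset_univ _))
          (by rw [hμ1]; exact ENNReal.one_lt_top)).ne⟩
      have heq : (⋂ n, f ⁻¹' V n) = f ⁻¹' {x} := by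
        rw [← Set.preimage_iInter, hVint]
      rw [heq, hsub] at this
      exact this
    have hev := htend.eventually_lt_const hε
    obtain ⟨n, hn⟩ := hev.exists
    exact ⟨V n, hVopen n, hxV n, hn⟩
  -- build the covers
  set 𝒰 : ℕ → Set (Set X) := fun n =>
    {U | IsOpen U ∧ μ (f ⁻¹' U) < 2⁻¹ ^ (n + 2)} with h𝒰
  have hcov : ∀ n, IsOpenCover (𝒰 n) := by
    intro n
    constructor
    · exact fun U hU => hU.1
    · apply Set.eq_univ_of_forall
      intro x
      obtain ⟨U, hUo, hxU, hUμ⟩ := key x (2⁻¹ ^ (n + 2))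
        (pos_iff_ne_zero.mpr (ENNReal.pow_ne_zero (by norm_num) _))
      exact ⟨U, ⟨hUo, hUμ⟩, hxU⟩
  obtain ⟨U, hU, hUcov⟩ := hR 𝒰 hcov
  have hsum : (1 : ENNReal) ≤ ∑' n, μ (f ⁻¹' U n) := by
    calc (1 : ENNReal) = μ Set.univ := hμ1.symm
    _ = μ (⋃ n, f ⁻¹' U n) := by rw [← Set.preimage_iUnion, hUcov, Set.preimage_univ]
    _ ≤ ∑' n, μ (f ⁻¹' U n) := MeasureTheory.measure_iUnion_le _
  have hbound : ∑' n, μ (f ⁻¹' U n) ≤ ∑' n : ℕ, (2⁻¹ : ENNReal) ^ (n + 2) :=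
    ENNReal.tsum_le_tsum fun n => (hU n).2.le
  have hgeom : ∑' n : ℕ, (2⁻¹ : ENNReal) ^ (n + 2) = 2⁻¹ := by
    have h1 : ∀ n : ℕ, (2⁻¹ : ENNReal) ^ (n + 2) = 2⁻¹ ^ n * 2⁻¹ ^ 2 := fun n => pow_add _ n 2
    rw [tsum_congr h1, ENNReal.tsum_mul_right, ENNReal.tsum_geometric,
      ENNReal.one_sub_inv_two, inv_inv, sq, ← mul_assoc,
      ENNReal.mul_inv_cancel two_ne_zero ENNReal.ofNat_ne_top, one_mul]
  have hfinal : (1 : ENNReal) ≤ 2⁻¹ := hgeom ▸ le_trans hsum hbound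
  have hlt : (2⁻¹ : ENNReal) < 1 := ENNReal.inv_lt_one.mpr ENNReal.one_lt_two
  exact absurd hfinal (not_le.mpr hlt)
end

section
/- Every T₃ (regular Hausdorff) Lindelöf space with the Rothberger property is zero-dimensional. -/
open Set

/-!
The range of a continuous real function on a Rothberger space has strong measure zero, hence is
Lebesgue null, so it omits a value in every interval. Regular Lindelöf spaces are normal; if a
Urysohn function `f` separates a point (`f = 0`) from a closed set (`f = 1`) and omits
`t ∈ (0, 1)`, then `{f < t} = {f ≤ t}` is a clopen neighbourhood of the point missing the set.
-/

open MeasureTheory ENNReal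

lemma RothbergerSpace.exists_range_subset_iUnion_ball {X Y : Type*} [TopologicalSpace X]
    [PseudoMetricSpace Y] (hX : RothbergerSpace X) {f : X → Y} (hf : Continuous f)
    {r : ℕ → ℝ} (hr : ∀ n, 0 < r n) :
    ∃ c : ℕ → Y, range f ⊆ ⋃ n, Metric.ball (c n) (r n) := by
  have hcover : ∀ n, IsOpenCover {V | ∃ c, V = f ⁻¹' Metric.ball c (r n)} := fun n =>
    ⟨by rintro V ⟨c, rfl⟩; exact Metric.isOpen_ball.preimage hf,
      eq_univ_of_forall fun x => ⟨_, ⟨f x, rfl⟩, Metric.mem_ball_self (hr n)⟩⟩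
  obtain ⟨U, hU, hUcover⟩ := hX _ hcover
  choose c hc using hU
  refine ⟨c, ?_⟩
  rintro - ⟨x, rfl⟩
  obtain ⟨n, hxn⟩ := mem_iUnion.mp (hUcover ▸ mem_univ x)
  exact mem_iUnion.mpr ⟨n, by rwa [hc n] at hxn⟩

lemma Real.volume_eq_zero_of_forall_subset_iUnion_ball {s : Set ℝ}
    (hs : ∀ r : ℕ → ℝ, (∀ n, 0 < r n) → ∃ c : ℕ → ℝ, s ⊆ ⋃ n, Metric.ball (c n) (r n)) :
    volume s = 0 := by
  by_contra hpos
  obtain ⟨ε, hε, hsum⟩ := ENNReal.exists_pos_sum_of_countable hpos ℕ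
  obtain ⟨c, hc⟩ := hs (fun n => ε n / 2) (fun n => by have := hε n; positivity)
  have hball : ∀ n, volume (Metric.ball (c n) (ε n / 2)) = ε n := fun n => by
    rw [Real.volume_ball, mul_div_cancel₀ _ two_ne_zero, ofReal_coe_nnreal]
  have : volume s < volume s :=
    calc volume s ≤ volume (⋃ n, Metric.ball (c n) (ε n / 2)) := measure_mono hc
      _ ≤ ∑' n, volume (Metric.ball (c n) (ε n / 2)) := measure_iUnion_le _
      _ = ∑' n, (ε n : ℝ≥0∞) := tsum_congr hball
      _ < volume s := hsum
  exact lt_irrefl _ this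

lemma RothbergerSpace.volume_range_eq_zero {X : Type*} [TopologicalSpace X]
    (hX : RothbergerSpace X) {f : X → ℝ} (hf : Continuous f) : volume (range f) = 0 :=
  Real.volume_eq_zero_of_forall_subset_iUnion_ball fun _ hr =>
    hX.exists_range_subset_iUnion_ball hf hr

lemma RothbergerSpace.exists_mem_Ioo_notMem_range {X : Type*} [TopologicalSpace X]
    (hX : RothbergerSpace X) {f : X → ℝ} (hf : Continuous f) {a b : ℝ} (hab : a < b) :
    ∃ t ∈ Ioo a b, t ∉ range f := by
  by_contra! h
  have := measure_mono (μ := volume) h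
  rw [hX.volume_range_eq_zero hf, Real.volume_Ioo, nonpos_iff_eq_zero, ofReal_eq_zero] at this
  linarith

lemma isClopen_preimage_Iio_of_notMem_range {X α : Type*} [TopologicalSpace X] [LinearOrder α]
    [TopologicalSpace α] [OrderClosedTopology α] {f : X → α} (hf : Continuous f) {t : α}
    (ht : t ∉ range f) : IsClopen (f ⁻¹' Iio t) := by
  have hIio : f ⁻¹' Iio t = f ⁻¹' Iic t := by
    ext x
    simp only [mem_preimage, mem_Iio, mem_Iic, le_iff_lt_or_eq, or_iff_left (ht ⟨x, ·⟩)]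
  exact ⟨hIio ▸ isClosed_Iic.preimage hf, isOpen_Iio.preimage hf⟩

theorem stmt10 (X : Type*) [TopologicalSpace X] [T3Space X] [LindelofSpace X]
    (h : RothbergerSpace X) :
    TopologicalSpace.IsTopologicalBasis {s : Set X | IsClopen s} := by
  refine TopologicalSpace.isTopologicalBasis_of_isOpen_of_nhds (fun s hs => hs.isOpen) ?_
  intro x u hxu hu
  obtain ⟨f, hfx, hfu, -⟩ := exists_continuous_zero_one_of_isClosed isClosed_singleton
    hu.isClosed_compl (disjoint_singleton_left.mpr (not_not_intro hxu))
  obtain ⟨t, ⟨ht0, ht1⟩, htf⟩ := h.exists_mem_Ioo_notMem_range f.continuous zero_lt_one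
  refine ⟨f ⁻¹' Iio t, isClopen_preimage_Iio_of_notMem_range f.continuous htf, ?_, ?_⟩
  · simpa [hfx (mem_singleton x)] using ht0
  · intro y hy
    by_contra hyu
    exact (ht1.trans_eq (hfu hyu).symm).not_gt hy
end

section
/- Every metrizable space with the Rothberger property has strong measure zero (with respect to any compatible metric). -/
open Set Metric

section PseudoMetric

variable {X : Type*} [PseudoMetricSpace X]

theorem isOpenCover_range_ball {r : ℝ} (hr : 0 < r) :
    IsOpenCover (range fun x : X => ball x r) := by
  refine ⟨?_, sUnion_eq_univ_iff.2 fun x => ⟨ball x r, mem_range_self x, mem_ball_self hr⟩⟩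
  rintro _ ⟨x, rfl⟩
  exact isOpen_ball

theorem RothbergerSpace.exists_iUnion_ball_eq_univ (h : RothbergerSpace X) {r : ℕ → ℝ}
    (hr : ∀ n, 0 < r n) : ∃ c : ℕ → X, ⋃ n, ball (c n) (r n) = univ := by
  obtain ⟨U, hU, hUcov⟩ := h _ fun n => isOpenCover_range_ball (hr n)
  choose c hc using hU
  exact ⟨c, by simpa only [hc] using hUcov⟩

theorem ediam_ball_le_ofReal (c : X) (r : ℝ) :
    ediam (ball c r) ≤ ENNReal.ofReal (2 * r) :=
  ediam_le_of_forall_dist_le fun x hx y hy => by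
    have := dist_triangle_right x y c
    rw [mem_ball] at hx hy
    linarith

end PseudoMetric

theorem stmt11 (X : Type*) [MetricSpace X] (h : RothbergerSpace X) :
    ∀ ε : ℕ → ℝ, (∀ n, 0 < ε n) →
      ∃ A : ℕ → Set X, (∀ n, EMetric.diam (A n) ≤ ENNReal.ofReal (ε n)) ∧
        (⋃ n, A n) = Set.univ := by
  intro ε hε
  obtain ⟨c, hc⟩ := h.exists_iUnion_ball_eq_univ fun n => half_pos (hε n)
  refine ⟨fun n => ball (c n) (ε n / 2), fun n => ?_, hc⟩
  exact (ediam_ball_le_ofReal (c n) (ε n / 2)).trans_eq (congrArg ENNReal.ofReal (by ring))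
end

section
/- A Lindelöf space X has the Hurewicz property if and only if X has the Menger property and every countable large open cover of X is groupable. -/
open Set

/-- The Menger property `S_fin^ω(𝒪,𝒪)`. -/
def MengerSpace (X : Type*) [TopologicalSpace X] : Prop :=
  ∀ 𝒰 : ℕ → Set (Set X), (∀ n, IsOpenCover (𝒰 n)) →
    ∃ ℱ : ℕ → Set (Set X), (∀ n, ℱ n ⊆ 𝒰 n ∧ (ℱ n).Finite) ∧
      (⋃ n, ⋃₀ ℱ n) = Set.univ

/-- The Hurewicz property. -/
def HurewiczSpace (X : Type*) [TopologicalSpace X] : Prop :=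
  ∀ 𝒰 : ℕ → Set (Set X), (∀ n, IsOpenCover (𝒰 n)) →
    ∃ ℱ : ℕ → Set (Set X), (∀ n, ℱ n ⊆ 𝒰 n ∧ (ℱ n).Finite) ∧
      ∀ x : X, {n : ℕ | x ∉ ⋃₀ ℱ n}.Finite

/-- A large cover is groupable if it can be partitioned into pairwise disjoint
finite pieces such that every point lies in the union of all but finitely many
of the pieces. -/
def Groupable {X : Type*} [TopologicalSpace X] (𝒰 : Set (Set X)) : Prop :=
  ∃ P : ℕ → Set (Set X), (∀ n, (P n).Finite) ∧
    (Pairwise fun m n => Disjoint (P m) (P n)) ∧ (⋃ n, P n) = 𝒰 ∧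
    ∀ x : X, {n : ℕ | x ∉ ⋃₀ P n}.Finite


section AuxStmt13

lemma aux_strictMono_mem (S : ℕ → Set ℕ) (h : ∀ i b, ∃ j, b < j ∧ j ∈ S i) :
    ∃ f : ℕ → ℕ, StrictMono f ∧ ∀ i, f i ∈ S i := by
  choose g hg1 hg2 using h
  refine ⟨fun i => Nat.rec (g 0 0) (fun i fi => g (i + 1) fi) i,
    strictMono_nat_of_lt_succ fun n => hg1 _ _, fun i => ?_⟩
  cases i with
  | zero => exact hg2 0 0
  | succ n => exact hg2 _ _

lemma aux_blocks (a b : ℕ → ℕ) (h0 : a 0 = 0) (hab : ∀ k, a k ≤ b k)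
    (hs : ∀ k, a (k + 1) = b k + 1) : ∀ n, ∃ k, a k ≤ n ∧ n ≤ b k := by
  intro n
  induction n with
  | zero => exact ⟨0, by omega, by have := hab 0; omega⟩
  | succ n ih =>
    obtain ⟨k, hk1, hk2⟩ := ih
    rcases Nat.lt_or_ge n (b k) with h | h
    · exact ⟨k, by omega, by omega⟩
    · refine ⟨k + 1, ?_, ?_⟩
      · have h1 := hs k; omega
      · have h1 := hs k; have h2 := hab (k + 1); omega

theorem hur_to_groupable {X : Type*} [TopologicalSpace X] (hH : HurewiczSpace X)
    (𝒰 : Set (Set X)) (hoc : IsOpenCover 𝒰) (hc : 𝒰.Countable)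
    (hl : ∀ x : X, {U ∈ 𝒰 | x ∈ U}.Infinite) : Groupable 𝒰 := by
  rcases isEmpty_or_nonempty X with hX | hX
  · -- X empty: 𝒰 is a subsingleton family
    refine ⟨fun n => if n = 0 then 𝒰 else ∅, ?_, ?_, ?_, fun x => (hX.false x).elim⟩ <;> try skip
    · intro n
      rcases Nat.eq_zero_or_pos n with rfl | hn
      · simp only [if_pos rfl]
        exact Set.Finite.subset (Set.finite_univ (α := Set X))
          (subset_univ _)
      · simp [Nat.pos_iff_ne_zero.mp hn]
    · intro m n hmn
      rcases Nat.eq_zero_or_pos m with rfl | hm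
      · simp [Nat.pos_iff_ne_zero.mp (Nat.pos_of_ne_zero (Ne.symm hmn))]
      · simp [Nat.pos_iff_ne_zero.mp hm]
    · ext U
      simp only [mem_iUnion]
      constructor
      · rintro ⟨n, hn⟩
        by_cases h : n = 0
        · simpa [h] using hn
        · simp [h] at hn
      · intro hU; exact ⟨0, by simpa using hU⟩
  · -- X nonempty: 𝒰 is infinite
    have h𝒰inf : 𝒰.Infinite := ((hl hX.some).mono (sep_subset _ _)).mono (fun _ h => h)
    have : Countable ↥𝒰 := hc.to_subtype
    have : Infinite ↥𝒰 := h𝒰inf.to_subtype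
    obtain ⟨d⟩ : Nonempty (Denumerable ↥𝒰) := nonempty_denumerable_iff.mpr ⟨‹_›, ‹_›⟩
    set e : ℕ → Set X := fun n => ((Denumerable.eqv ↥𝒰).symm n : Set X) with he
    have einj : Function.Injective e :=
      Subtype.val_injective.comp (Denumerable.eqv ↥𝒰).symm.injective
    have erange : Set.range e = 𝒰 := by
      ext U; constructor
      · rintro ⟨n, rfl⟩; exact ((Denumerable.eqv ↥𝒰).symm n).2
      · intro hU; exact ⟨Denumerable.eqv ↥𝒰 ⟨U, hU⟩, by simp [he]⟩
    -- the covers with initial segments removed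
    set 𝒱 : ℕ → Set (Set X) := fun n => 𝒰 \ (e '' Iio n) with h𝒱
    have h𝒱oc : ∀ n, IsOpenCover (𝒱 n) := by
      intro n
      refine ⟨fun U hU => hoc.1 U hU.1, ?_⟩
      apply eq_univ_of_forall
      intro x
      obtain ⟨U, hU, hUe⟩ := ((hl x).diff ((finite_Iio n).image e)).nonempty
      exact ⟨U, ⟨hU.1, hUe⟩, hU.2⟩
    obtain ⟨ℱ, hℱ, hℱpt⟩ := hH 𝒱 h𝒱oc
    -- choose block endpoints
    have hnext : ∀ c : ℕ, ∃ m', c < m' ∧ ℱ c ⊆ e '' Iio m' := by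
      intro c
      have hsub : ℱ c ⊆ Set.range e := ((hℱ c).1.trans diff_subset).trans erange.symm.subset
      have : ∀ V : Set X, ∃ i, V ∈ ℱ c → V = e i := by
        intro V
        by_cases hV : V ∈ ℱ c
        · obtain ⟨i, hi⟩ := hsub hV
          exact ⟨i, fun _ => hi.symm⟩
        · exact ⟨0, fun h => absurd h hV⟩
      choose idx hidx using this
      obtain ⟨bnd, hbnd⟩ := ((hℱ c).2.image idx).bddAbove
      refine ⟨max (c + 1) (bnd + 1), by omega, fun V hV => ?_⟩
      have : idx V ≤ bnd := hbnd ⟨V, hV, rfl⟩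
      exact ⟨idx V, by simp; omega, (hidx V hV).symm⟩
    choose nxt hnxt1 hnxt2 using hnext
    set m : ℕ → ℕ := fun k => Nat.rec 0 (fun _ mk => nxt mk) k with hm
    have hm0 : m 0 = 0 := rfl
    have hmsucc : ∀ k, m (k + 1) = nxt (m k) := fun k => rfl
    have hmmono : StrictMono m := strictMono_nat_of_lt_succ fun k => hnxt1 (m k)
    refine ⟨fun k => e '' Ico (m k) (m (k + 1)), ?_, ?_, ?_, ?_⟩
    · exact fun k => (finite_Ico _ _).image e
    · intro k l hkl
      rw [Set.disjoint_image_iff einj]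
      rcases hkl.lt_or_gt with h | h
      · intro s hs1 hs2 i hi
        have h1 := hs1 hi; have h2 := hs2 hi
        simp only [mem_Ico] at h1 h2
        have : m (k + 1) ≤ m l := hmmono.le_iff_le.mpr h
        omega
      · intro s hs1 hs2 i hi
        have h1 := hs1 hi; have h2 := hs2 hi
        simp only [mem_Ico] at h1 h2
        have : m (l + 1) ≤ m k := hmmono.le_iff_le.mpr h
        omega
    · rw [← image_iUnion]
      have : ⋃ k, Ico (m k) (m (k + 1)) = univ := by
        apply eq_univ_of_forall
        intro n
        obtain ⟨k, hk1, hk2⟩ := aux_blocks m (fun k => m (k + 1) - 1) hm0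
          (fun k => by have := hmmono (show k < k + 1 by omega); show m k ≤ m (k + 1) - 1; omega)
          (fun k => by have := hmmono (show k < k + 1 by omega); show m (k + 1) = m (k + 1) - 1 + 1; omega) n
        have hk2' : n ≤ m (k + 1) - 1 := hk2
        exact mem_iUnion.mpr ⟨k, mem_Ico.mpr ⟨hk1, by have := hmmono (show k < k + 1 by omega); omega⟩⟩
      rw [this, image_univ, erange]
    · intro x
      apply Set.Finite.subset ((hℱpt x).preimage (hmmono.injective.injOn))
      intro k hk
      simp only [mem_setOf_eq, mem_preimage] at hk ⊢
      intro hx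
      apply hk
      obtain ⟨V, hV, hxV⟩ := hx
      refine ⟨V, ?_, hxV⟩
      -- V ∈ ℱ (m k) implies V ∈ P k
      obtain ⟨i, hi, rfl⟩ := hnxt2 (m k) hV
      have hnot : e i ∉ e '' Iio (m k) := ((hℱ (m k)).1 hV).2
      have : ¬ i < m k := fun h => hnot ⟨i, h, rfl⟩
      exact ⟨i, mem_Ico.mpr ⟨by omega, by rw [hmsucc]; exact hi⟩, rfl⟩


theorem rev_dir {X : Type*} [TopologicalSpace X] (hM : MengerSpace X)
    (hG : ∀ 𝒰 : Set (Set X), IsOpenCover 𝒰 → 𝒰.Countable →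
      (∀ x : X, {U ∈ 𝒰 | x ∈ U}.Infinite) → Groupable 𝒰) :
    HurewiczSpace X := by
  intro 𝒰 h𝒰
  -- covers by intersections of initial segments
  set IC : ℕ → Set (Set X) := fun n =>
    {V | ∃ U : ℕ → Set X, (∀ i, U i ∈ 𝒰 i) ∧ V = ⋂ i ∈ Set.Iic n, U i} with hIC
  have hICopen : ∀ n, IsOpenCover (IC n) := by
    intro n
    constructor
    · rintro V ⟨U, hU, rfl⟩
      exact (finite_Iic n).isOpen_biInter fun i _ => (h𝒰 i).1 _ (hU i)
    · apply eq_univ_of_forall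
      intro x
      have : ∀ i, ∃ U, U ∈ 𝒰 i ∧ x ∈ U := by
        intro i
        have hx : x ∈ ⋃₀ 𝒰 i := (h𝒰 i).2.symm ▸ mem_univ x
        exact hx
      choose U hU hxU using this
      exact ⟨_, ⟨U, hU, rfl⟩, by simp only [mem_iInter]; exact fun i _ => hxU i⟩
  have proj : ∀ i n, i ≤ n → ∀ V ∈ IC n, ∃ U, U ∈ 𝒰 i ∧ V ⊆ U := by
    rintro i n hin V ⟨U, hU, rfl⟩
    exact ⟨U i, hU i, biInter_subset_of_mem (mem_Iic.mpr hin)⟩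
  by_cases hA : ∀ n, ∃ F : Set (Set X), F ⊆ IC n ∧ F.Finite ∧ ⋃₀ F = univ
  · -- every IC n has a finite subcover: Hurewicz trivially
    have : ∀ n, ∃ F : Set (Set X), F ⊆ 𝒰 n ∧ F.Finite ∧ ⋃₀ F = univ := by
      intro n
      obtain ⟨F, hFsub, hFfin, hFcov⟩ := hA n
      have : ∀ V : Set X, ∃ U, V ∈ F → U ∈ 𝒰 n ∧ V ⊆ U := by
        intro V
        by_cases hV : V ∈ F
        · obtain ⟨U, hU1, hU2⟩ := proj n n le_rfl V (hFsub hV)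
          exact ⟨U, fun _ => ⟨hU1, hU2⟩⟩
        · exact ⟨∅, fun h => absurd h hV⟩
      choose u hu using this
      refine ⟨u '' F, ?_, hFfin.image u, ?_⟩
      · rintro _ ⟨V, hV, rfl⟩; exact (hu V hV).1
      · apply eq_univ_of_forall
        intro x
        obtain ⟨V, hV, hxV⟩ := hFcov.symm ▸ mem_univ x
        exact ⟨u V, ⟨V, hV, rfl⟩, (hu V hV).2 hxV⟩
    choose F hF1 hF2 hF3 using this
    refine ⟨F, fun n => ⟨hF1 n, hF2 n⟩, fun x => ?_⟩
    have : {n : ℕ | x ∉ ⋃₀ F n} = ∅ := by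
      apply eq_empty_iff_forall_notMem.mpr
      intro n hn
      exact hn ((hF3 n).symm ▸ mem_univ x)
    rw [this]; exact finite_empty
  · push_neg at hA
    obtain ⟨n₀, hn₀⟩ := hA
    -- hn₀ : ∀ F, F ⊆ IC n₀ → F.Finite → ⋃₀ F ≠ univ
    have hXne : Nonempty X := by
      by_contra h
      have hXe : IsEmpty X := not_nonempty_iff.mp h
      apply hn₀ ∅ (empty_subset _) finite_empty
      rw [sUnion_empty]
      exact (univ_eq_empty_iff.mpr hXe).symm
    have noFin : ∀ S : Set (Set X), S.Finite → (∀ V ∈ S, ∃ r, V ∈ IC (n₀ + r)) →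
        ⋃₀ S ≠ univ := by
      intro S hSfin hS hcov
      have : ∀ V : Set X, ∃ W, V ∈ S → W ∈ IC n₀ ∧ V ⊆ W := by
        intro V
        by_cases hV : V ∈ S
        · obtain ⟨r, U, hU, rfl⟩ := hS V hV
          exact ⟨⋂ i ∈ Set.Iic n₀, U i, fun _ => ⟨⟨U, hU, rfl⟩,
            biInter_subset_biInter_left (Iic_subset_Iic.mpr (Nat.le_add_right _ _))⟩⟩
        · exact ⟨∅, fun h => absurd h hV⟩
      choose W hW using this
      apply hn₀ (W '' S) (by rintro _ ⟨V, hV, rfl⟩; exact (hW V hV).1) (hSfin.image W)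
      apply eq_univ_of_forall
      intro x
      obtain ⟨V, hV, hxV⟩ := hcov.symm ▸ mem_univ x
      exact ⟨W V, ⟨V, hV, rfl⟩, (hW V hV).2 hxV⟩
    -- Menger on all tails
    choose FF hFF1 hFF2 using fun j : ℕ => hM (fun m => IC (n₀ + j + m)) (fun _ => hICopen _)
    set G : ℕ → Set (Set X) := fun n => ⋃ j ∈ Set.Iic n, FF j (n - j) with hG'
    have Gsub : ∀ n, ∀ V ∈ G n, V ∈ IC (n₀ + n) := by
      intro n V hV
      simp only [hG', mem_iUnion, exists_prop] at hV
      obtain ⟨j, hj, hV⟩ := hV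
      have := (hFF1 j (n - j)).1 hV
      rwa [show n₀ + j + (n - j) = n₀ + n by rw [mem_Iic] at hj; omega] at this
    have Gfin : ∀ n, (G n).Finite := fun n => (finite_Iic n).biUnion fun j _ => (hFF1 j _).2
    have hTail : ∀ (x : X) (c : ℕ), ∃ n, c ≤ n ∧ x ∈ ⋃₀ G n := by
      intro x c
      have : x ∈ ⋃ m, ⋃₀ FF c m := (hFF2 c).symm ▸ mem_univ x
      obtain ⟨m, V, hV, hxV⟩ := by simpa only [mem_iUnion] using this
      refine ⟨c + m, Nat.le_add_right _ _, V, ?_, hxV⟩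
      simp only [hG', mem_iUnion, exists_prop]
      exact ⟨c, mem_Iic.mpr (Nat.le_add_right _ _), by rwa [show c + m - c = m by omega]⟩
    -- blocks
    set BF : ℕ → ℕ → Set (Set X) := fun c m => ⋃ r ∈ Set.Icc c m, G r with hBF
    set BU : ℕ → ℕ → Set X := fun c m => ⋃₀ BF c m with hBU
    have BFfin : ∀ c m, (BF c m).Finite := fun c m => (finite_Icc c m).biUnion fun r _ => Gfin r
    have BUne : ∀ c m, BU c m ≠ univ := by
      intro c m
      apply noFin _ (BFfin c m)
      intro V hV
      simp only [hBF, mem_iUnion, exists_prop] at hV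
      obtain ⟨r, _, hVr⟩ := hV
      exact ⟨r, Gsub r V hVr⟩
    have BUmono : ∀ c m m', m ≤ m' → BU c m ⊆ BU c m' := by
      intro c m m' hmm'
      apply sUnion_subset_sUnion
      exact biUnion_subset_biUnion_left (Icc_subset_Icc_right hmm')
    have BUmem : ∀ c m r, c ≤ r → r ≤ m → ⋃₀ G r ⊆ BU c m := by
      intro c m r h1 h2
      apply sUnion_subset_sUnion
      exact subset_biUnion_of_mem (mem_Icc.mpr ⟨h1, h2⟩)
    have BUtail : ∀ (x : X) (c : ℕ), ∃ m, c ≤ m ∧ x ∈ BU c m := by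
      intro x c
      obtain ⟨n, hcn, hx⟩ := hTail x c
      exact ⟨n, hcn, BUmem c n n hcn le_rfl hx⟩
    -- choice of escape points
    have hpt : ∀ D : Set X, ∃ y : X, D ≠ univ → y ∉ D := by
      intro D
      by_cases h : D = univ
      · exact ⟨hXne.some, fun h' => absurd h h'⟩
      · obtain ⟨y, hy⟩ := (ne_univ_iff_exists_notMem D).mp h
        exact ⟨y, fun _ => hy⟩
    choose zf hzf using hpt
    -- choice of block ends absorbing finitely many points
    have hincl : ∀ (a k : ℕ) (z : ℕ → X), ∃ m, a ≤ m ∧ ∀ j < k, z j ∈ BU a m := by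
      intro a k z
      induction k with
      | zero => exact ⟨a, le_rfl, by omega⟩
      | succ k ih =>
        obtain ⟨m, ham, hm⟩ := ih
        obtain ⟨m', ham', hm'⟩ := BUtail (z k) a
        refine ⟨max m m', le_trans ham (le_max_left _ _), fun j hj => ?_⟩
        rcases Nat.lt_or_ge j k with h | h
        · exact BUmono a m _ (le_max_left _ _) (hm j h)
        · have : j = k := by omega
          subst this
          exact BUmono a m' _ (le_max_right _ _) hm'
    choose M hM1 hM2 using hincl
    -- the recursion
    set st : ℕ → ℕ × ℕ × (ℕ → X) := fun k => Nat.rec (0, 0, fun _ => hXne.some)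
      (fun k s =>
        (s.2.1 + 1, M (s.2.1 + 1) (k + 1) (Function.update s.2.2 k (zf (BU s.1 s.2.1))),
          Function.update s.2.2 k (zf (BU s.1 s.2.1)))) k with hst
    set a : ℕ → ℕ := fun k => (st k).1 with ha
    set b : ℕ → ℕ := fun k => (st k).2.1 with hb
    set zz : ℕ → ℕ → X := fun k => (st k).2.2 with hzz
    set D : ℕ → Set X := fun k => BU (a k) (b k) with hD
    have ha0 : a 0 = 0 := rfl
    have hb0 : b 0 = 0 := rfl
    have hasucc : ∀ k, a (k + 1) = b k + 1 := fun k => rfl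
    have hzzsucc : ∀ k, zz (k + 1) = Function.update (zz k) k (zf (D k)) := fun k => rfl
    have hbsucc : ∀ k, b (k + 1) = M (b k + 1) (k + 1) (zz (k + 1)) := fun k => rfl
    have hab : ∀ k, a k ≤ b k := by
      intro k
      cases k with
      | zero => omega
      | succ k => rw [hasucc, hbsucc]; exact hM1 _ _ _
    have hzzstab : ∀ j k, j < k → zz k j = zf (D j) := by
      intro j k hjk
      induction k with
      | zero => omega
      | succ k ih =>
        rw [hzzsucc]
        rcases Nat.lt_or_ge j k with h | h
        · rw [Function.update_of_ne (by omega)]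
          exact ih h
        · have : j = k := by omega
          subst this
          rw [Function.update_self]
    have hZin : ∀ j k, j < k → zf (D j) ∈ D k := by
      intro j k hjk
      cases k with
      | zero => omega
      | succ k =>
        have := hM2 (b k + 1) (k + 1) (zz (k + 1)) j (by omega)
        rw [hzzstab j (k + 1) hjk] at this
        show zf (D j) ∈ BU (a (k + 1)) (b (k + 1))
        rw [hasucc, hbsucc]
        exact this
    have hDne : ∀ k, D k ≠ univ := fun k => BUne _ _
    have hDinj : Function.Injective D := by
      intro j k hjk
      by_contra hne
      rcases Ne.lt_or_gt hne with h | h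
      · exact hzf (D j) (hDne j) (hjk ▸ hZin j k h)
      · exact hzf (D k) (hDne k) (hjk ▸ hZin k j h)
    -- membership in blocks
    have hblock : ∀ n, ∃ k, a k ≤ n ∧ n ≤ b k := aux_blocks a b ha0 hab hasucc
    have hamono : ∀ k, k ≤ a k := by
      intro k
      induction k with
      | zero => omega
      | succ k ih => rw [hasucc]; have := hab k; omega
    have hbmono : StrictMono b := by
      apply strictMono_nat_of_lt_succ
      intro k
      have h1 := hab (k + 1)
      rw [hasucc] at h1
      omega
    have hGD : ∀ (x : X) (n : ℕ), x ∈ ⋃₀ G n → ∃ k, x ∈ D k ∧ n ≤ b k := by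
      intro x n hx
      obtain ⟨k, hk1, hk2⟩ := hblock n
      exact ⟨k, BUmem (a k) (b k) n hk1 hk2 hx, hk2⟩
    -- the large cover
    have hcover : IsOpenCover (Set.range D) := by
      constructor
      · rintro _ ⟨k, rfl⟩
        apply isOpen_sUnion
        intro V hV
        simp only [hBF, mem_iUnion, exists_prop] at hV
        obtain ⟨r, _, hVr⟩ := hV
        obtain ⟨U, hU, rfl⟩ := Gsub r V hVr
        exact (finite_Iic _).isOpen_biInter fun i _ => (h𝒰 i).1 _ (hU i)
      · apply eq_univ_of_forall
        intro x
        obtain ⟨n, _, hx⟩ := hTail x 0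
        obtain ⟨k, hk, _⟩ := hGD x n hx
        exact ⟨D k, ⟨k, rfl⟩, hk⟩
    have hlarge : ∀ x : X, {U ∈ Set.range D | x ∈ U}.Infinite := by
      intro x
      have hinf : {k | x ∈ D k}.Infinite := by
        by_contra h
        rw [Set.not_infinite] at h
        obtain ⟨K, hK⟩ := h.bddAbove
        obtain ⟨n, hn, hx⟩ := hTail x (b K + 1)
        obtain ⟨k, hk, hnk⟩ := hGD x n hx
        have hKk : k ≤ K := hK hk
        have := hbmono.le_iff_le.mpr hKk
        omega
      apply Set.Infinite.mono (s := D '' {k | x ∈ D k})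
      · rintro _ ⟨k, hk, rfl⟩
        exact ⟨⟨k, rfl⟩, hk⟩
      · exact hinf.image hDinj.injOn
    obtain ⟨P, hPfin, hPdisj, hPunion, hPpt⟩ :=
      hG (Set.range D) hcover (countable_range D) hlarge
    have hPsub : ∀ j, P j ⊆ Set.range D := fun j => hPunion ▸ subset_iUnion P j
    -- extraction of the Hurewicz selection
    have cert : ∀ i k, i ≤ n₀ + a k → ∃ F : Set (Set X), F ⊆ 𝒰 i ∧ F.Finite ∧ D k ⊆ ⋃₀ F := by
      intro i k hik
      have : ∀ V : Set X, ∃ U, V ∈ BF (a k) (b k) → U ∈ 𝒰 i ∧ V ⊆ U := by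
        intro V
        by_cases hV : V ∈ BF (a k) (b k)
        · simp only [hBF, mem_iUnion, exists_prop] at hV
          obtain ⟨r, hr, hVr⟩ := hV
          rw [mem_Icc] at hr
          obtain ⟨U, hU1, hU2⟩ := proj i (n₀ + r) (by omega) V (Gsub r V hVr)
          exact ⟨U, fun _ => ⟨hU1, hU2⟩⟩
        · exact ⟨∅, fun h => absurd h hV⟩
      choose u hu using this
      refine ⟨u '' BF (a k) (b k), ?_, (BFfin _ _).image u, ?_⟩
      · rintro _ ⟨V, hV, rfl⟩; exact (hu V hV).1
      · rintro x ⟨V, hV, hxV⟩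
        exact ⟨u V, ⟨V, hV, rfl⟩, (hu V hV).2 hxV⟩
    set good : ℕ → Set ℕ := fun i =>
      {j | (P j).Nonempty ∧ ∀ E ∈ P j, ∃ k, E = D k ∧ i ≤ n₀ + a k} with hgood
    have hgoodcof : ∀ i, (good i)ᶜ.Finite := by
      intro i
      have hbad1 : {j | P j = ∅}.Finite := by
        apply (hPpt hXne.some).subset
        intro j hj
        simp only [mem_setOf_eq] at hj ⊢
        rw [hj, sUnion_empty]
        exact notMem_empty _
      have hsmallfin : ({k | n₀ + a k < i}).Finite := by
        apply (finite_Iio i).subset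
        intro k hk
        simp only [mem_setOf_eq, mem_Iio] at hk ⊢
        have := hamono k
        omega
      have hbad2 : {j | ∃ E ∈ P j, ∃ k, E = D k ∧ n₀ + a k < i}.Finite := by
        have : {j | ∃ E ∈ P j, ∃ k, E = D k ∧ n₀ + a k < i} ⊆
            ⋃ k ∈ {k | n₀ + a k < i}, {j | D k ∈ P j} := by
          rintro j ⟨E, hE, k, rfl, hk⟩
          exact mem_biUnion hk hE
        apply Set.Finite.subset _ this
        apply hsmallfin.biUnion
        intro k _
        apply Set.Subsingleton.finite
        intro j1 h1 j2 h2
        by_contra hne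
        exact Set.disjoint_left.mp (hPdisj hne) h1 h2
      apply (hbad1.union hbad2).subset
      intro j hj
      simp only [hgood, mem_compl_iff, mem_setOf_eq, not_and] at hj
      rcases eq_empty_or_nonempty (P j) with he | hne
      · exact Or.inl he
      · right
        have := hj hne
        push_neg at this
        obtain ⟨E, hE, hEk⟩ := this
        obtain ⟨k, hk⟩ := hPsub j hE
        exact ⟨E, hE, k, hk.symm, by have := hEk k hk.symm; omega⟩
    obtain ⟨jf, hjfmono, hjf⟩ := aux_strictMono_mem good (by
      intro i bd
      have hinf : (good i).Infinite := by
        have := (hgoodcof i).infinite_compl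
        rwa [compl_compl] at this
      obtain ⟨j, hj1, hj2⟩ := hinf.exists_gt bd
      exact ⟨j, hj2, hj1⟩)
    have hselect : ∀ i, ∃ F : Set (Set X), F ⊆ 𝒰 i ∧ F.Finite ∧ ⋃₀ P (jf i) ⊆ ⋃₀ F := by
      intro i
      have hgi := hjf i
      simp only [hgood, mem_setOf_eq] at hgi
      have : ∀ E : Set X, ∃ F : Set (Set X), E ∈ P (jf i) →
          F ⊆ 𝒰 i ∧ F.Finite ∧ E ⊆ ⋃₀ F := by
        intro E
        by_cases hE : E ∈ P (jf i)
        · obtain ⟨k, rfl, hik⟩ := hgi.2 E hE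
          obtain ⟨F, h1, h2, h3⟩ := cert i k hik
          exact ⟨F, fun _ => ⟨h1, h2, h3⟩⟩
        · exact ⟨∅, fun h => absurd h hE⟩
      choose FE hFE using this
      refine ⟨⋃ E ∈ P (jf i), FE E, ?_, ?_, ?_⟩
      · rintro U hU
        simp only [mem_iUnion, exists_prop] at hU
        obtain ⟨E, hE, hU⟩ := hU
        exact (hFE E hE).1 hU
      · exact (hPfin (jf i)).biUnion fun E hE => (hFE E hE).2.1
      · rintro x ⟨E, hE, hxE⟩
        obtain ⟨U, hU, hxU⟩ := (hFE E hE).2.2 hxE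
        exact ⟨U, mem_biUnion hE hU, hxU⟩
    choose ℱ hℱ1 hℱ2 hℱ3 using hselect
    refine ⟨ℱ, fun i => ⟨hℱ1 i, hℱ2 i⟩, fun x => ?_⟩
    apply ((hPpt x).preimage (hjfmono.injective.injOn)).subset
    intro i hi
    simp only [mem_setOf_eq, mem_preimage] at hi ⊢
    intro hx
    exact hi (hℱ3 i hx)


end AuxStmt13

theorem stmt13 (X : Type*) [TopologicalSpace X] [LindelofSpace X] :
    HurewiczSpace X ↔
      (MengerSpace X ∧
        ∀ 𝒰 : Set (Set X), IsOpenCover 𝒰 → 𝒰.Countable →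
          (∀ x : X, {U ∈ 𝒰 | x ∈ U}.Infinite) → Groupable 𝒰) := by
  constructor
  · intro hH
    refine ⟨?_, fun 𝒰 hoc hc hl => hur_to_groupable hH 𝒰 hoc hc hl⟩
    intro 𝒰 h𝒰
    obtain ⟨ℱ, hℱ, hℱpt⟩ := hH 𝒰 h𝒰
    refine ⟨ℱ, hℱ, ?_⟩
    apply Set.eq_univ_of_forall
    intro x
    obtain ⟨n, hn⟩ := (hℱpt x).infinite_compl.nonempty
    simp only [Set.mem_compl_iff, Set.mem_setOf_eq, not_not] at hn
    exact Set.mem_iUnion.mpr ⟨n, hn⟩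
  · rintro ⟨hM, hG⟩
    exact rev_dir hM hG
end

section
/- Let X be a Lindelöf P-space (countable intersections of open sets are open). Then X is a γ-space: for every sequence (𝒰_n : n ∈ ℕ) of open ω-covers of X there exist U_n ∈ 𝒰_n such that every x ∈ X belongs to U_n for all but finitely many n. -/
open Set

/-- A P-space: countable intersections of open sets are open. -/
def PSpace (X : Type*) [TopologicalSpace X] : Prop :=
  ∀ U : ℕ → Set X, (∀ n, IsOpen (U n)) → IsOpen (⋂ n, U n)

/-- An open ω-cover: the whole space is not a member, every member is open and
every finite subset of the space is contained in some member. -/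
def IsOmegaCover {X : Type*} [TopologicalSpace X] (𝒰 : Set (Set X)) : Prop :=
  (∀ U ∈ 𝒰, IsOpen U) ∧ Set.univ ∉ 𝒰 ∧
    ∀ F : Set X, F.Finite → ∃ U ∈ 𝒰, F ⊆ U

/-- The γ-space property `S₁^ω(Ω,Γ)`: from every sequence of open ω-covers one
can pick one member of each so that every point lies in all but finitely many
of the chosen sets. -/
def GammaSpace (X : Type*) [TopologicalSpace X] : Prop :=
  ∀ 𝒰 : ℕ → Set (Set X), (∀ n, IsOmegaCover (𝒰 n)) →
    ∃ U : ℕ → Set X, (∀ n, U n ∈ 𝒰 n) ∧ ∀ x : X, {n : ℕ | x ∉ U n}.Finite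

/-!
In a P-space, for a countable family `𝒱` of open sets the intersection `W x` of the members of
`𝒱` containing `x` is an open neighbourhood of `x`, and every point of `W x` lies in every member
of `𝒱` that contains `x`. So once each ω-cover `𝒰ₙ` is shrunk to a countable ω-cover `𝒱ₙ`,
Lindelöfness gives points `x₀, x₁, …` whose sets `W xᵢ` (for `𝒱 = ⋃ₙ 𝒱ₙ`) cover the space, and
choosing `Uₙ ∈ 𝒱ₙ` containing `x₀, …, xₙ` works: a point of `W xᵢ` lies in `Uₙ` for all `n ≥ i`.

The countable ω-subcover is found by induction on the number `k` of points to be covered: the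
members containing `x` have a countable subfamily `𝒱ₓ` covering all `k`-point sets, `⋂₀ 𝒱ₓ` is an
open neighbourhood of `x`, and the `𝒱ₓ` for countably many `x` whose neighbourhoods cover the space
together cover all `(k+1)`-point sets.
-/

section

variable {X : Type*}

def CoversSetsOfCardLE (k : ℕ) (𝒲 : Set (Set X)) : Prop :=
  ∀ F : Finset X, F.card ≤ k → ∃ U ∈ 𝒲, ↑F ⊆ U

theorem CoversSetsOfCardLE.containing {k : ℕ} {𝒲 : Set (Set X)}
    (h : CoversSetsOfCardLE (k + 1) 𝒲) (x : X) : CoversSetsOfCardLE k {U ∈ 𝒲 | x ∈ U} := by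
  classical
  intro F hF
  obtain ⟨U, hU, hFU⟩ := h (insert x F) ((F.card_insert_le x).trans (by omega))
  exact ⟨U, ⟨hU, hFU (by simp)⟩, fun y hy => hFU (by simp [hy])⟩

variable [TopologicalSpace X]

theorem PSpace.isOpen_sInter (hP : PSpace X) {S : Set (Set X)} (hS : S.Countable)
    (hopen : ∀ U ∈ S, IsOpen U) : IsOpen (⋂₀ S) := by
  rcases S.eq_empty_or_nonempty with rfl | hne
  · simp
  · obtain ⟨f, rfl⟩ := hS.exists_eq_range hne
    rw [sInter_range]
    exact hP f fun n => hopen _ ⟨n, rfl⟩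

theorem exists_countable_subset_coversSetsOfCardLE [LindelofSpace X] (hP : PSpace X) (k : ℕ)
    {𝒲 : Set (Set X)} (hopen : ∀ U ∈ 𝒲, IsOpen U) (h𝒲 : CoversSetsOfCardLE k 𝒲) :
    ∃ 𝒱 ⊆ 𝒲, 𝒱.Countable ∧ CoversSetsOfCardLE k 𝒱 := by
  classical
  induction k generalizing 𝒲 with
  | zero =>
    obtain ⟨U₀, hU₀, -⟩ := h𝒲 ∅ le_rfl
    refine ⟨{U₀}, singleton_subset_iff.2 hU₀, countable_singleton U₀, fun F hF => ?_⟩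
    rw [Finset.card_eq_zero.1 (Nat.le_zero.1 hF)]
    exact ⟨U₀, rfl, by simp⟩
  | succ k ih =>
    obtain ⟨U₀, hU₀, -⟩ := h𝒲 ∅ (Nat.zero_le _)
    choose 𝒱 h𝒱 h𝒱c h𝒱k using fun x =>
      ih (fun U hU => hopen U hU.1) (h𝒲.containing x)
    have hN : ∀ x, ⋂₀ 𝒱 x ∈ nhds x := fun x =>
      (hP.isOpen_sInter (h𝒱c x) fun U hU => hopen U (h𝒱 x hU).1).mem_nhds
        fun U hU => (h𝒱 x hU).2
    obtain ⟨t, htc, ht⟩ := LindelofSpace.elim_nhds_subcover _ hN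
    refine ⟨insert U₀ (⋃ y ∈ t, 𝒱 y), insert_subset hU₀ (iUnion₂_subset fun y _ U hU =>
      (h𝒱 y hU).1), (htc.biUnion fun y _ => h𝒱c y).insert U₀, fun F hF => ?_⟩
    rcases F.eq_empty_or_nonempty with rfl | ⟨x, hxF⟩
    · exact ⟨U₀, mem_insert _ _, by simp⟩
    obtain ⟨y, hyt, hxy⟩ := mem_iUnion₂.1 (ht ▸ mem_univ x)
    obtain ⟨U, hU, hFU⟩ := h𝒱k y (F.erase x) (by rw [F.card_erase_of_mem hxF]; omega)
    refine ⟨U, mem_insert_of_mem _ (mem_biUnion hyt hU), fun z hz => ?_⟩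
    rcases eq_or_ne z x with rfl | hzx
    · exact hxy U hU
    · exact hFU (Finset.mem_erase.2 ⟨hzx, hz⟩)

theorem IsOmegaCover.exists_countable_subset [LindelofSpace X] (hP : PSpace X)
    {𝒰 : Set (Set X)} (h𝒰 : IsOmegaCover 𝒰) :
    ∃ 𝒱 ⊆ 𝒰, 𝒱.Countable ∧ ∀ F : Finset X, ∃ U ∈ 𝒱, ↑F ⊆ U := by
  choose 𝒱 h𝒱 h𝒱c h𝒱k using fun k =>
    exists_countable_subset_coversSetsOfCardLE hP k h𝒰.1 fun F _ => h𝒰.2.2 F F.finite_toSet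
  refine ⟨⋃ k, 𝒱 k, iUnion_subset h𝒱, countable_iUnion h𝒱c, fun F => ?_⟩
  obtain ⟨U, hU, hFU⟩ := h𝒱k F.card F le_rfl
  exact ⟨U, mem_iUnion_of_mem _ hU, hFU⟩

theorem GammaSpace.of_isEmpty [IsEmpty X] : GammaSpace X := fun 𝒰 h𝒰 => by
  choose U hU using fun n => (h𝒰 n).2.2 ∅ finite_empty
  exact ⟨U, fun n => (hU n).1, isEmptyElim⟩

end

theorem stmt14 (X : Type*) [TopologicalSpace X] [LindelofSpace X] (hP : PSpace X) :
    GammaSpace X := by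
  classical
  rcases isEmpty_or_nonempty X with hX | hX
  · exact GammaSpace.of_isEmpty
  intro 𝒰 h𝒰
  choose 𝒱 h𝒱𝒰 h𝒱c h𝒱F using fun n => (h𝒰 n).exists_countable_subset hP
  set W : X → Set X := fun x => ⋂₀ {V ∈ (⋃ n, 𝒱 n) | x ∈ V}
  have hWopen : ∀ x, IsOpen (W x) := fun x =>
    hP.isOpen_sInter ((countable_iUnion h𝒱c).mono (sep_subset _ _)) fun V hV => by
      obtain ⟨n, hn⟩ := mem_iUnion.1 hV.1
      exact (h𝒰 n).1 V (h𝒱𝒰 n hn)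
  obtain ⟨s, hs⟩ := isLindelof_univ.indexed_countable_subcover W hWopen
    fun x _ => mem_iUnion.2 ⟨x, fun V hV => hV.2⟩
  choose U hU𝒱 hsU using fun n => h𝒱F n ((Finset.range (n + 1)).image s)
  refine ⟨U, fun n => h𝒱𝒰 n (hU𝒱 n), fun x => ?_⟩
  obtain ⟨i, hxi⟩ := mem_iUnion.1 (hs (mem_univ x))
  refine (finite_Iio i).subset fun n hn => mem_Iio.2 <| not_le.1 fun hin => hn ?_
  have hsi : s i ∈ U n :=
    hsU n (Finset.mem_coe.2 (Finset.mem_image_of_mem s (Finset.mem_range.2 (by omega))))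
  exact hxi (U n) ⟨mem_iUnion_of_mem n (hU𝒱 n), hsi⟩
end

section
/- If X is an uncountable discrete space and X* = X ∪ {∞} is its one-point compactification, then X* has the Rothberger property, but the point ∞ is not a Gδ point of X*. -/
open Set

/-!
Every open neighbourhood of `∞` in the one-point compactification of a discrete space is cofinite.
Hence one member of the first cover containing `∞` leaves only countably many points, which
the remaining covers can pick off one at a time; and a countable intersection of neighbourhoods
of `∞` misses only countably many points, so it cannot be `{∞}` when `X` is uncountable.
-/

section CountableComplNeighbourhoods

variable {X : Type*} [TopologicalSpace X]

theorem IsOpenCover.exists_mem_of_mem {𝒰 : Set (Set X)} (h𝒰 : IsOpenCover 𝒰) (x : X) :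
    ∃ U ∈ 𝒰, x ∈ U :=
  mem_sUnion.1 (by rw [h𝒰.2]; trivial)

theorem IsOpenCover.exists_selection_superset_range {𝒰 : ℕ → Set (Set X)}
    (h𝒰 : ∀ n, IsOpenCover (𝒰 n)) (f : ℕ → X) :
    ∃ U : ℕ → Set X, (∀ n, U n ∈ 𝒰 n) ∧ range f ⊆ ⋃ n, U n := by
  choose U hU𝒰 hfU using fun n => (h𝒰 n).exists_mem_of_mem (f n)
  exact ⟨U, hU𝒰, range_subset_iff.2 fun n => mem_iUnion_of_mem n (hfU n)⟩

theorem RothbergerSpace.of_countable_compl_of_isOpen {p : X}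
    (hp : ∀ s, IsOpen s → p ∈ s → sᶜ.Countable) : RothbergerSpace X := by
  intro 𝒰 h𝒰
  have : Nonempty X := ⟨p⟩
  obtain ⟨U₀, hU₀𝒰, hpU₀⟩ := (h𝒰 0).exists_mem_of_mem p
  obtain ⟨f, hf⟩ := countable_iff_exists_subset_range.1 (hp U₀ ((h𝒰 0).1 U₀ hU₀𝒰) hpU₀)
  obtain ⟨V, hV𝒰, hfV⟩ := IsOpenCover.exists_selection_superset_range (fun n => h𝒰 (n + 1)) f
  refine ⟨fun n => Nat.casesOn n U₀ V, fun n => ?_, eq_univ_of_forall fun x => ?_⟩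
  · cases n with
    | zero => exact hU₀𝒰
    | succ n => exact hV𝒰 n
  · by_cases hx : x ∈ U₀
    · exact mem_iUnion_of_mem 0 hx
    · obtain ⟨n, hn⟩ := mem_iUnion.1 (hfV (hf hx))
      exact mem_iUnion_of_mem (n + 1) hn

theorem not_isGδ_singleton_of_countable_compl_of_isOpen [Uncountable X] {p : X}
    (hp : ∀ s, IsOpen s → p ∈ s → sᶜ.Countable) : ¬ IsGδ {p} := by
  rintro ⟨T, hT, hTc, hpT⟩
  have hcompl : ({p}ᶜ : Set X).Countable := by
    rw [hpT, compl_sInter]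
    refine (hTc.image _).sUnion ?_
    rintro _ ⟨t, ht, rfl⟩
    exact hp t (hT t ht) ((singleton_subset_iff.1 hpT.le) t ht)
  exact not_countable_univ (union_compl_self {p} ▸ (countable_singleton p).union hcompl)

end CountableComplNeighbourhoods

theorem OnePoint.finite_compl_of_isOpen_of_infty_mem {X : Type*} [TopologicalSpace X]
    [DiscreteTopology X] {s : Set (OnePoint X)} (hs : IsOpen s) (h : OnePoint.infty ∈ s) :
    sᶜ.Finite := by
  have hK : ((↑) ⁻¹' s : Set X)ᶜ.Finite := ((isOpen_iff_of_mem h).1 hs).2.finite_of_discrete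
  refine (hK.image (↑)).subset fun x hx => ?_
  induction x using OnePoint.rec with
  | infty => exact absurd h hx
  | coe x => exact ⟨x, hx, rfl⟩

theorem stmt17 (X : Type*) [TopologicalSpace X] [DiscreteTopology X] [Uncountable X] :
    RothbergerSpace (OnePoint X) ∧
      ¬ ∃ U : ℕ → Set (OnePoint X), (∀ n, IsOpen (U n)) ∧
          (⋂ n, U n) = {OnePoint.infty} := by
  have hinfty : ∀ s : Set (OnePoint X), IsOpen s → OnePoint.infty ∈ s → sᶜ.Countable :=
    fun s hs h => (OnePoint.finite_compl_of_isOpen_of_infty_mem hs h).countable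
  have : Uncountable (OnePoint X) := OnePoint.coe_injective.uncountable
  refine ⟨.of_countable_compl_of_isOpen hinfty, fun ⟨U, hU, hUinfty⟩ => ?_⟩
  exact not_isGδ_singleton_of_countable_compl_of_isOpen hinfty (hUinfty ▸ .iInter_of_isOpen hU)
end
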